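/- arXiv:0707.0038 — 5 statements merged into one kernel-verified Lean document; each statement's English description precedes it below -/
import Mathlib

section
/- If Σ is a presection in a connected stable translation quiver Γ, then Σ intersects every τ-orbit of Γ at least once. -/
/-! Both mesh conditions applied twice show that every power of τ maps arrows to arrows.
Hence if `τⁿx ∈ Σ` and `x — y` is an edge, then `τⁿx — τⁿy` is an edge at `Σ`, and (P1) or (P2)
puts `τⁿy` or `τⁿ⁺¹y` (resp. `τⁿ⁻¹y`) in `Σ`. So the vertices whose orbit meets `Σ` form a nonempty
set closed under edges, which by connectedness of `Γ` is everything. -/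

namespace Stmt3

section

variable {V : Type*} {Arrow : V → V → Prop} {τ : Equiv.Perm V}

theorem arrow_zpow_apply (hmesh₁ : ∀ x y, Arrow x y → Arrow (τ y) x)
    (hmesh₂ : ∀ x y, Arrow x y → Arrow y (τ.symm x)) (n : ℤ) {x y : V} (h : Arrow x y) :
    Arrow ((τ ^ n) x) ((τ ^ n) y) := by
  induction n using Int.induction_on generalizing x y with
  | zero => simpa using h
  | succ k ih =>
    rw [zpow_add_one, Equiv.Perm.mul_apply, Equiv.Perm.mul_apply]
    exact ih (hmesh₁ _ _ (hmesh₁ _ _ h))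
  | pred k ih =>
    rw [zpow_sub_one, Equiv.Perm.mul_apply, Equiv.Perm.mul_apply, Equiv.Perm.inv_def]
    exact ih (hmesh₂ _ _ (hmesh₂ _ _ h))

variable {S : Set V}

theorem exists_zpow_mem_of_arrow
    (hτ : ∀ (n : ℤ) (x y : V), Arrow x y → Arrow ((τ ^ n) x) ((τ ^ n) y))
    (hP1 : ∀ x y, Arrow x y → x ∈ S → y ∈ S ∨ τ y ∈ S)
    {x y : V} (h : Arrow x y) (hx : ∃ n : ℤ, (τ ^ n) x ∈ S) : ∃ n : ℤ, (τ ^ n) y ∈ S := by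
  obtain ⟨n, hn⟩ := hx
  rcases hP1 _ _ (hτ n x y h) hn with hy | hy
  · exact ⟨n, hy⟩
  · exact ⟨1 + n, by rwa [zpow_one_add, Equiv.Perm.mul_apply]⟩

theorem exists_zpow_mem_of_arrow_rev
    (hτ : ∀ (n : ℤ) (x y : V), Arrow x y → Arrow ((τ ^ n) x) ((τ ^ n) y))
    (hP2 : ∀ x y, Arrow x y → y ∈ S → x ∈ S ∨ τ.symm x ∈ S)
    {x y : V} (h : Arrow y x) (hx : ∃ n : ℤ, (τ ^ n) x ∈ S) : ∃ n : ℤ, (τ ^ n) y ∈ S := by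
  obtain ⟨n, hn⟩ := hx
  rcases hP2 _ _ (hτ n y x h) hn with hy | hy
  · exact ⟨n, hy⟩
  · exact ⟨-1 + n, by rwa [zpow_add, zpow_neg_one, Equiv.Perm.mul_apply, Equiv.Perm.inv_def]⟩

end

theorem presection_meets_every_orbit_general
    {V : Type*} (Arrow : V → V → Prop) (τ : Equiv.Perm V)
    -- stable translation quiver: mesh conditions
    (hmesh₁ : ∀ x y, Arrow x y → Arrow (τ y) x)
    (hmesh₂ : ∀ x y, Arrow x y → Arrow y (τ.symm x))
    -- Γ is connected
    (hconn : ∀ x y : V, Relation.ReflTransGen (fun a b => Arrow a b ∨ Arrow b a) x y)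
    (S : Set V)
    -- Σ is a nonempty connected full subquiver
    (hne : S.Nonempty)
    -- Σ is a presection: (P1) and (P2)
    (hP1 : ∀ x y, Arrow x y → x ∈ S → y ∈ S ∨ τ y ∈ S)
    (hP2 : ∀ x y, Arrow x y → y ∈ S → x ∈ S ∨ τ.symm x ∈ S) :
    -- Σ meets the τ-orbit of every vertex
    ∀ y : V, ∃ n : ℤ, (τ ^ n) y ∈ S := by
  have hτ : ∀ (n : ℤ) (x y : V), Arrow x y → Arrow ((τ ^ n) x) ((τ ^ n) y) :=
    fun n _ _ => arrow_zpow_apply hmesh₁ hmesh₂ n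
  intro y
  obtain ⟨x₀, hx₀⟩ := hne
  induction hconn x₀ y with
  | refl => exact ⟨0, by simpa using hx₀⟩
  | tail _ hedge ih =>
    rcases hedge with h | h
    · exact exists_zpow_mem_of_arrow hτ hP1 h ih
    · exact exists_zpow_mem_of_arrow_rev hτ hP2 h ih

theorem presection_meets_every_orbit
    {V : Type*} (Arrow : V → V → Prop) (τ : Equiv.Perm V)
    -- stable translation quiver: mesh conditions
    (hmesh₁ : ∀ x y, Arrow x y → Arrow (τ y) x)
    (hmesh₂ : ∀ x y, Arrow x y → Arrow y (τ.symm x))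
    -- Γ is connected
    (hconn : ∀ x y : V, Relation.ReflTransGen (fun a b => Arrow a b ∨ Arrow b a) x y)
    (S : Set V)
    -- Σ is a nonempty connected full subquiver
    (hne : S.Nonempty)
    (hSconn : ∀ x ∈ S, ∀ y ∈ S,
      Relation.ReflTransGen (fun a b => a ∈ S ∧ b ∈ S ∧ (Arrow a b ∨ Arrow b a)) x y)
    -- Σ is a presection: (P1) and (P2)
    (hP1 : ∀ x y, Arrow x y → x ∈ S → y ∈ S ∨ τ y ∈ S)
    (hP2 : ∀ x y, Arrow x y → y ∈ S → x ∈ S ∨ τ.symm x ∈ S) :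
    -- Σ meets the τ-orbit of every vertex
    ∀ y : V, ∃ n : ℤ, (τ ^ n) y ∈ S :=
  presection_meets_every_orbit_general Arrow τ hmesh₁ hmesh₂ hconn S hne hP1 hP2

end Stmt3
end

section
/- In ℤQ with Q finite and acyclic, if a presection Σ satisfies that the vertex y lies in Σ and there exists a path x₀ → x₁ → ⋯ → x_t = y with x₀ ∈ Σ and x₁, …, x_{t−1} ∉ Σ (t ≥ 2), then one of τy, τ²y, …, τᵗy lies in Σ. -/
/- STATEMENT 7: In ℤQ with Q finite acyclic, if Σ is a presection, y ∈ Σ, and there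
   is a path x₀ → x₁ → ⋯ → x_t = y with x₀ ∈ Σ and x₁, …, x_{t-1} ∉ Σ (t ≥ 2), then
   one of τy, τ²y, …, τᵗy lies in Σ. -/

namespace Stmt7

variable {Q0 : Type*}

def ZArrow (QArrow : Q0 → Q0 → Prop) : ℤ × Q0 → ℤ × Q0 → Prop :=
  fun x y => (y.1 = x.1 ∧ QArrow x.2 y.2) ∨ (y.1 = x.1 + 1 ∧ QArrow y.2 x.2)

def tauZQ (Q0 : Type*) : Equiv.Perm (ℤ × Q0) :=
  ⟨fun x => (x.1 - 1, x.2), fun x => (x.1 + 1, x.2),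
    fun x => by simp, fun x => by simp⟩

/-! Walk along the path keeping an exponent `k` with `τᵏ xᵢ ∈ Σ`. Since `x₀ ∈ Σ` and `x₁ ∉ Σ`,
the presection condition on `x₀ → x₁` gives `τ x₁ ∈ Σ`. If `τᵏ xᵢ ∈ Σ`, the translated arrow
`τᵏ xᵢ → τᵏ xᵢ₊₁` puts `τᵏ xᵢ₊₁` or `τᵏ⁺¹ xᵢ₊₁` in `Σ`, so the exponent grows by at most one
per step and ends between `1` and `t`. -/

section TranslatedPath

variable {α : Type*} {R : α → α → Prop} {σ : Equiv.Perm α}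

lemma rel_pow_apply (hσ : ∀ x y, R x y → R (σ x) (σ y)) (k : ℕ) {x y : α} (h : R x y) :
    R ((σ ^ k) x) ((σ ^ k) y) := by
  induction k with
  | zero => exact h
  | succ k ih =>
    rw [pow_succ', Equiv.Perm.mul_apply, Equiv.Perm.mul_apply]
    exact hσ _ _ ih

lemma exists_pow_apply_mem_of_path (hσ : ∀ x y, R x y → R (σ x) (σ y)) {S : Set α}
    (hS : ∀ x y, R x y → x ∈ S → y ∈ S ∨ σ y ∈ S) {p : ℕ → α} {t : ℕ} (ht : 1 ≤ t)
    (hpath : ∀ i < t, R (p i) (p (i + 1))) (h0 : p 0 ∈ S) (h1 : p 1 ∉ S) :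
    ∃ k, 1 ≤ k ∧ k ≤ t ∧ (σ ^ k) (p t) ∈ S := by
  induction t, ht using Nat.le_induction with
  | base =>
    have hσ1 : σ (p 1) ∈ S := (hS _ _ (hpath 0 one_pos) h0).resolve_left h1
    exact ⟨1, le_rfl, le_rfl, by simpa using hσ1⟩
  | succ t _ ih =>
    obtain ⟨k, hk1, hkt, hkS⟩ := ih fun i hi => hpath i (by omega)
    rcases hS _ _ (rel_pow_apply hσ k (hpath t (by omega))) hkS with h | h
    · exact ⟨k, hk1, by omega, h⟩
    · exact ⟨k + 1, by omega, by omega, by rwa [pow_succ', Equiv.Perm.mul_apply]⟩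

end TranslatedPath

lemma zArrow_tauZQ {QArrow : Q0 → Q0 → Prop} {x y : ℤ × Q0} (h : ZArrow QArrow x y) :
    ZArrow QArrow (tauZQ Q0 x) (tauZQ Q0 y) := by
  rcases h with ⟨h1, h2⟩ | ⟨h1, h2⟩
  · exact Or.inl ⟨by simp [tauZQ, h1], h2⟩
  · exact Or.inr ⟨by simp [tauZQ, h1], h2⟩

theorem presection_translate_on_path_general
    (QArrow : Q0 → Q0 → Prop)
    (S : Set (ℤ × Q0))
    -- Σ is a presection
    (hP1 : ∀ x y, ZArrow QArrow x y → x ∈ S → y ∈ S ∨ tauZQ Q0 y ∈ S)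
    -- a path x₀ → x₁ → ⋯ → x_t = y with t ≥ 2, x₀ ∈ Σ and x₁, …, x_{t-1} ∉ Σ
    (p : ℕ → ℤ × Q0) (t : ℕ) (ht : 2 ≤ t)
    (hpath : ∀ i < t, ZArrow QArrow (p i) (p (i + 1)))
    (hstart : p 0 ∈ S) (hmid : ∀ i, 0 < i → i < t → p i ∉ S)
    (y : ℤ × Q0) (hy : p t = y) :
    -- conclusion: one of τy, τ²y, …, τᵗy lies in Σ
    ∃ k, 1 ≤ k ∧ k ≤ t ∧ (tauZQ Q0 ^ k) y ∈ S := by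
  subst hy
  exact exists_pow_apply_mem_of_path (R := ZArrow QArrow) (fun _ _ => zArrow_tauZQ) hP1
    (by omega) hpath hstart (hmid 1 one_pos ht)

theorem presection_translate_on_path
    [Fintype Q0] (QArrow : Q0 → Q0 → Prop)
    -- Q is acyclic
    (hQacyc : ∀ (p : ℕ → Q0) (t : ℕ), 0 < t → (∀ i < t, QArrow (p i) (p (i + 1))) →
      p 0 ≠ p t)
    (S : Set (ℤ × Q0))
    -- Σ is a connected full subquiver of ℤQ
    (hSconn : ∀ x ∈ S, ∀ y ∈ S, Relation.ReflTransGen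
      (fun a b => a ∈ S ∧ b ∈ S ∧ (ZArrow QArrow a b ∨ ZArrow QArrow b a)) x y)
    -- Σ is a presection
    (hP1 : ∀ x y, ZArrow QArrow x y → x ∈ S → y ∈ S ∨ tauZQ Q0 y ∈ S)
    (hP2 : ∀ x y, ZArrow QArrow x y → y ∈ S → x ∈ S ∨ (tauZQ Q0).symm x ∈ S)
    -- a path x₀ → x₁ → ⋯ → x_t = y with t ≥ 2, x₀ ∈ Σ and x₁, …, x_{t-1} ∉ Σ
    (p : ℕ → ℤ × Q0) (t : ℕ) (ht : 2 ≤ t)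
    (hpath : ∀ i < t, ZArrow QArrow (p i) (p (i + 1)))
    (hstart : p 0 ∈ S) (hmid : ∀ i, 0 < i → i < t → p i ∉ S)
    (y : ℤ × Q0) (hy : p t = y) (hyS : y ∈ S) :
    -- conclusion: one of τy, τ²y, …, τᵗy lies in Σ
    ∃ k, 1 ≤ k ∧ k ≤ t ∧ (tauZQ Q0 ^ k) y ∈ S :=
  presection_translate_on_path_general QArrow S hP1 p t ht hpath hstart hmid y hy

end Stmt7
end

section
/- In a stable translation quiver, if Σ is a finite presection contained in a connected component Γ, then Γ has only finitely many τ-orbits. -/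
/-!
Applying the two mesh conditions twice shows that τ, and hence every power of τ, preserves
arrows. So if some translate `τⁿ a` lies in Σ and `a — b` is an edge, the presection axioms
put `τⁿ b` or `τⁿ⁺¹ b` (resp. `τⁿ⁻¹ b`) into Σ. Walking along a path from a point of Σ, every
vertex of the connected quiver has a translate in Σ, so the finite set Σ meets every τ-orbit.
-/

namespace Stmt8

section TranslationQuiver

variable {V : Type*} {Arrow : V → V → Prop} {τ : Equiv.Perm V}

theorem arrow_zpow_apply (hmesh₁ : ∀ x y, Arrow x y → Arrow (τ y) x)
    (hmesh₂ : ∀ x y, Arrow x y → Arrow y (τ.symm x)) (n : ℤ) :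
    ∀ {a b}, Arrow a b → Arrow ((τ ^ n) a) ((τ ^ n) b) := by
  induction n using Int.induction_on with
  | zero => exact id
  | succ k ih =>
    intro a b h
    simpa only [zpow_add_one, Equiv.Perm.mul_apply] using ih (hmesh₁ _ _ (hmesh₁ _ _ h))
  | pred k ih =>
    intro a b h
    simpa only [zpow_sub_one, Equiv.Perm.mul_apply, Equiv.Perm.inv_def] using
      ih (hmesh₂ _ _ (hmesh₂ _ _ h))

variable {S : Set V}

theorem exists_zpow_apply_mem_of_arrow
    (hequiv : ∀ (n : ℤ) {a b}, Arrow a b → Arrow ((τ ^ n) a) ((τ ^ n) b))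
    (hP1 : ∀ x y, Arrow x y → x ∈ S → y ∈ S ∨ τ y ∈ S) {a b : V} {n : ℤ}
    (hab : Arrow a b) (ha : (τ ^ n) a ∈ S) : ∃ m : ℤ, (τ ^ m) b ∈ S := by
  rcases hP1 _ _ (hequiv n hab) ha with hb | hb
  · exact ⟨n, hb⟩
  · exact ⟨1 + n, by rwa [zpow_one_add, Equiv.Perm.mul_apply]⟩

theorem exists_zpow_apply_mem_of_arrow_rev
    (hequiv : ∀ (n : ℤ) {a b}, Arrow a b → Arrow ((τ ^ n) a) ((τ ^ n) b))
    (hP2 : ∀ x y, Arrow x y → y ∈ S → x ∈ S ∨ τ.symm x ∈ S) {a b : V} {n : ℤ}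
    (hba : Arrow b a) (ha : (τ ^ n) a ∈ S) : ∃ m : ℤ, (τ ^ m) b ∈ S := by
  rcases hP2 _ _ (hequiv n hba) ha with hb | hb
  · exact ⟨n, hb⟩
  · exact ⟨-1 + n, by rwa [zpow_add, zpow_neg_one, Equiv.Perm.mul_apply, Equiv.Perm.inv_def]⟩

theorem exists_zpow_apply_mem_of_reflTransGen
    (hequiv : ∀ (n : ℤ) {a b}, Arrow a b → Arrow ((τ ^ n) a) ((τ ^ n) b))
    (hP1 : ∀ x y, Arrow x y → x ∈ S → y ∈ S ∨ τ y ∈ S)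
    (hP2 : ∀ x y, Arrow x y → y ∈ S → x ∈ S ∨ τ.symm x ∈ S) {s z : V} (hs : s ∈ S)
    (hsz : Relation.ReflTransGen (fun a b => Arrow a b ∨ Arrow b a) s z) :
    ∃ n : ℤ, (τ ^ n) z ∈ S := by
  induction hsz with
  | refl => exact ⟨0, hs⟩
  | tail _ hab ih =>
    obtain ⟨n, hn⟩ := ih
    rcases hab with hab | hba
    · exact exists_zpow_apply_mem_of_arrow hequiv hP1 hab hn
    · exact exists_zpow_apply_mem_of_arrow_rev hequiv hP2 hba hn

end TranslationQuiver

theorem finite_presection_finitely_many_orbits_general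
    {V : Type*} (Arrow : V → V → Prop) (τ : Equiv.Perm V)
    -- stable translation quiver: mesh conditions
    (hmesh₁ : ∀ x y, Arrow x y → Arrow (τ y) x)
    (hmesh₂ : ∀ x y, Arrow x y → Arrow y (τ.symm x))
    -- Γ is connected (we take V to be the connected component Γ)
    (hconn : ∀ x y : V, Relation.ReflTransGen (fun a b => Arrow a b ∨ Arrow b a) x y)
    (S : Set V)
    -- Σ is a nonempty connected full subquiver
    (hne : S.Nonempty)
    -- Σ is a presection
    (hP1 : ∀ x y, Arrow x y → x ∈ S → y ∈ S ∨ τ y ∈ S)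
    (hP2 : ∀ x y, Arrow x y → y ∈ S → x ∈ S ∨ τ.symm x ∈ S)
    -- Σ is finite
    (hfin : S.Finite) :
    -- Γ has only finitely many τ-orbits
    ∃ F : Set V, F.Finite ∧ ∀ y : V, ∃ x ∈ F, ∃ n : ℤ, (τ ^ n) x = y := by
  obtain ⟨s, hs⟩ := hne
  refine ⟨S, hfin, fun y => ?_⟩
  obtain ⟨n, hn⟩ := exists_zpow_apply_mem_of_reflTransGen
    (arrow_zpow_apply hmesh₁ hmesh₂) hP1 hP2 hs (hconn s y)
  exact ⟨(τ ^ n) y, hn, -n, by rw [zpow_neg, Equiv.Perm.inv_eq_iff_eq]⟩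

theorem finite_presection_finitely_many_orbits
    {V : Type*} (Arrow : V → V → Prop) (τ : Equiv.Perm V)
    -- stable translation quiver: mesh conditions
    (hmesh₁ : ∀ x y, Arrow x y → Arrow (τ y) x)
    (hmesh₂ : ∀ x y, Arrow x y → Arrow y (τ.symm x))
    -- Γ is connected (we take V to be the connected component Γ)
    (hconn : ∀ x y : V, Relation.ReflTransGen (fun a b => Arrow a b ∨ Arrow b a) x y)
    (S : Set V)
    -- Σ is a nonempty connected full subquiver
    (hne : S.Nonempty)
    (hSconn : ∀ x ∈ S, ∀ y ∈ S, Relation.ReflTransGen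
      (fun a b => a ∈ S ∧ b ∈ S ∧ (Arrow a b ∨ Arrow b a)) x y)
    -- Σ is a presection
    (hP1 : ∀ x y, Arrow x y → x ∈ S → y ∈ S ∨ τ y ∈ S)
    (hP2 : ∀ x y, Arrow x y → y ∈ S → x ∈ S ∨ τ.symm x ∈ S)
    -- Σ is finite
    (hfin : S.Finite) :
    -- Γ has only finitely many τ-orbits
    ∃ F : Set V, F.Finite ∧ ∀ y : V, ∃ x ∈ F, ∃ n : ℤ, (τ ^ n) x = y :=
  finite_presection_finitely_many_orbits_general Arrow τ hmesh₁ hmesh₂ hconn S hne hP1 hP2 hfin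

end Stmt8
end

section
/- Let Γ be a stable translation quiver containing a ray, i.e., an infinite sectional path x₀ → x₁ → x₂ → ⋯ of pairwise distinct vertices such that each x_{i+1} lies in a τ-orbit distinct from those of x₀, …, x_i. If Σ is a presection in Γ containing x₀, then for each i ≥ 0 at least one of τⁱx_i, τ^{i−1}x_i, …, τ⁰x_i belongs to Σ. Consequently, Σ is infinite. -/
/-! Pushing the ray forward through the presection: if `τᵏxᵢ ∈ Σ`, the arrow `τᵏxᵢ → τᵏxᵢ₊₁`
forces `τᵏxᵢ₊₁ ∈ Σ` or `τᵏ⁺¹xᵢ₊₁ ∈ Σ`. The vertices found this way lie in the pairwise distinct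
τ-orbits of the `xᵢ`, so they are pairwise distinct and `Σ` is infinite. -/

namespace Stmt9

open Equiv

section Ray

variable {V : Type*} {Arrow : V → V → Prop} {τ : Perm V}

theorem arrow_pow_apply (hmesh : ∀ u v, Arrow u v → Arrow (τ u) (τ v)) (k : ℕ) {u v : V}
    (h : Arrow u v) : Arrow ((τ ^ k) u) ((τ ^ k) v) := by
  induction k with
  | zero => simpa using h
  | succ k ih => simpa only [pow_succ', Perm.mul_apply] using hmesh _ _ ih

theorem exists_pow_apply_mem_of_arrow_succ (hmesh : ∀ u v, Arrow u v → Arrow (τ u) (τ v))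
    {x : ℕ → V} (hray : ∀ i, Arrow (x i) (x (i + 1))) {S : Set V}
    (hS : ∀ u v, Arrow u v → u ∈ S → v ∈ S ∨ τ v ∈ S) (hx0 : x 0 ∈ S) (i : ℕ) :
    ∃ k ≤ i, (τ ^ k) (x i) ∈ S := by
  induction i with
  | zero => exact ⟨0, le_rfl, hx0⟩
  | succ i ih =>
    obtain ⟨k, hk, hkS⟩ := ih
    rcases hS _ _ (arrow_pow_apply hmesh k (hray i)) hkS with hnext | hnext
    · exact ⟨k, by omega, hnext⟩
    · exact ⟨k + 1, by omega, by rwa [pow_succ', Perm.mul_apply]⟩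

theorem not_sameCycle_of_lt {x : ℕ → V}
    (horb : ∀ i, ∀ j ≤ i, ∀ n : ℤ, (τ ^ n) (x j) ≠ x (i + 1)) {i j : ℕ} (hij : i < j) :
    ¬ τ.SameCycle (x i) (x j) := by
  rintro ⟨n, hn⟩
  obtain ⟨j, rfl⟩ := Nat.exists_eq_add_of_lt hij
  exact horb (i + j) i (by omega) n hn

theorem injective_pow_apply_of_not_sameCycle {x : ℕ → V}
    (hx : ∀ {i j}, i < j → ¬ τ.SameCycle (x i) (x j)) (k : ℕ → ℕ) :
    Function.Injective fun i => (τ ^ k i) (x i) := by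
  have hcycle : ∀ {i j}, (τ ^ k i) (x i) = (τ ^ k j) (x j) → τ.SameCycle (x i) (x j) := by
    intro i j h
    have : τ.SameCycle ((τ ^ k i) (x i)) ((τ ^ k j) (x j)) := h ▸ Perm.SameCycle.refl _ _
    simpa only [Perm.sameCycle_pow_left, Perm.sameCycle_pow_right] using this
  intro i j h
  rcases lt_trichotomy i j with hlt | heq | hgt
  · exact absurd (hcycle h) (hx hlt)
  · exact heq
  · exact absurd (hcycle h.symm) (hx hgt)

end Ray

theorem presection_containing_ray_start_is_infinite_general
    {V : Type*} (Arrow : V → V → Prop) (τ : Equiv.Perm V)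
    -- stable translation quiver: for every arrow u → v there are arrows
    -- τv → u, v → τ⁻¹u and τu → τv
    (hmesh₃ : ∀ u v, Arrow u v → Arrow (τ u) (τ v))
    -- a ray: an infinite sectional path of pairwise distinct vertices
    (x : ℕ → V)
    (hray : ∀ i, Arrow (x i) (x (i + 1)))
    -- each x_{i+1} lies in a τ-orbit distinct from those of x₀, …, x_i
    (horb : ∀ i, ∀ j ≤ i, ∀ n : ℤ, (τ ^ n) (x j) ≠ x (i + 1))
    (S : Set V)
    -- Σ is a connected full subquiver which is a presection containing x₀
    (hP1 : ∀ u v, Arrow u v → u ∈ S → v ∈ S ∨ τ v ∈ S)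
    (hx0 : x 0 ∈ S) :
    -- conclusion: for each i, some τᵏx_i with 0 ≤ k ≤ i lies in Σ, and Σ is infinite
    (∀ i : ℕ, ∃ k ≤ i, (τ ^ (k : ℕ)) (x i) ∈ S) ∧ S.Infinite := by
  have hmeet := exists_pow_apply_mem_of_arrow_succ hmesh₃ hray hP1 hx0
  refine ⟨hmeet, ?_⟩
  choose k _ hkS using hmeet
  exact Set.infinite_of_injective_forall_mem
    (injective_pow_apply_of_not_sameCycle (not_sameCycle_of_lt horb) k) hkS

theorem presection_containing_ray_start_is_infinite
    {V : Type*} (Arrow : V → V → Prop) (τ : Equiv.Perm V)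
    -- stable translation quiver: for every arrow u → v there are arrows
    -- τv → u, v → τ⁻¹u and τu → τv
    (hmesh₁ : ∀ u v, Arrow u v → Arrow (τ v) u)
    (hmesh₂ : ∀ u v, Arrow u v → Arrow v (τ.symm u))
    (hmesh₃ : ∀ u v, Arrow u v → Arrow (τ u) (τ v))
    -- a ray: an infinite sectional path of pairwise distinct vertices
    (x : ℕ → V)
    (hdist : Function.Injective x)
    (hray : ∀ i, Arrow (x i) (x (i + 1)))
    (hsec : ∀ i, 1 ≤ i → τ (x (i + 1)) ≠ x (i - 1))
    -- each x_{i+1} lies in a τ-orbit distinct from those of x₀, …, x_i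
    (horb : ∀ i, ∀ j ≤ i, ∀ n : ℤ, (τ ^ n) (x j) ≠ x (i + 1))
    (S : Set V)
    -- Σ is a connected full subquiver which is a presection containing x₀
    (hSconn : ∀ u ∈ S, ∀ v ∈ S, Relation.ReflTransGen
      (fun a b => a ∈ S ∧ b ∈ S ∧ (Arrow a b ∨ Arrow b a)) u v)
    (hP1 : ∀ u v, Arrow u v → u ∈ S → v ∈ S ∨ τ v ∈ S)
    (hP2 : ∀ u v, Arrow u v → v ∈ S → u ∈ S ∨ τ.symm u ∈ S)
    (hx0 : x 0 ∈ S) :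
    -- conclusion: for each i, some τᵏx_i with 0 ≤ k ≤ i lies in Σ, and Σ is infinite
    (∀ i : ℕ, ∃ k ≤ i, (τ ^ (k : ℕ)) (x i) ∈ S) ∧ S.Infinite :=
  presection_containing_ray_start_is_infinite_general Arrow τ hmesh₃ x hray horb S hP1 hx0

end Stmt9
end

section
/- Let Σ be a section in a connected component Γ of the Auslander–Reiten quiver of a triangulated category 𝒟 with Serre functor (e.g. the bounded derived category of a hereditary algebra). If Σ is convex in ind 𝒟, then Hom(X, τY) = 0 for all X, Y ∈ Σ. -/
/- STATEMENT 13: Let Σ be a section in a component of the AR-quiver of a triangulated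
   (Krull–Schmidt, Hom-finite) category 𝒟 with AR-translation τ. If Σ is convex in
   ind 𝒟, then Hom(X, τY) = 0 for all X, Y ∈ Σ: a nonzero morphism X → τY extends to
   a path X → τY → E → Y of nonzero morphisms between indecomposables, contradicting
   convexity (since τY ∉ Σ). -/

namespace Stmt13

open CategoryTheory

theorem convex_section_hom_tau_vanishes
    (D : Type*) [Category D] [Limits.HasZeroMorphisms D]
    -- the indecomposable objects of 𝒟
    (Indec : D → Prop)
    -- the Auslander–Reiten translation
    (τ : D → D)
    (S : Set D)
    -- Σ consists of indecomposables, and so do their translates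
    (hSind : ∀ X ∈ S, Indec X)
    (hτind : ∀ Y ∈ S, Indec (τ Y))
    -- Σ is a section: it meets each τ-orbit once, so τY ∉ Σ for Y ∈ Σ
    (hsec : ∀ Y ∈ S, τ Y ∉ S)
    -- AR-triangles: for each Y ∈ Σ there is an indecomposable E with irreducible
    -- (in particular nonzero) morphisms τY → E and E → Y
    (hAR : ∀ Y ∈ S, ∃ E : D, Indec E ∧ (∃ f : τ Y ⟶ E, f ≠ 0) ∧ (∃ g : E ⟶ Y, g ≠ 0))
    -- Σ is convex in ind 𝒟: any path of nonzero morphisms between indecomposables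
    -- with endpoints in Σ lies entirely in Σ
    (hconv : ∀ (p : ℕ → D) (t : ℕ), (∀ i ≤ t, Indec (p i)) →
      (∀ i < t, ∃ f : p i ⟶ p (i + 1), f ≠ 0) →
      p 0 ∈ S → p t ∈ S → ∀ i ≤ t, p i ∈ S) :
    -- conclusion: Hom(X, τY) = 0 for all X, Y ∈ Σ
    ∀ X ∈ S, ∀ Y ∈ S, ∀ f : X ⟶ τ Y, f = 0 := by
  intro X hX Y hY f
  by_contra hf
  obtain ⟨E, hEind, ⟨g, hg⟩, ⟨h, hh⟩⟩ := hAR Y hY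
  set p : ℕ → D := fun i => if i = 0 then X else if i = 1 then τ Y else if i = 2 then E else Y with hp
  have h1 : p 1 ∈ S := by
    refine hconv p 3 ?_ ?_ ?_ ?_ 1 (by norm_num)
    · intro i hi
      interval_cases i <;> simp [hp] <;>
        [exact hSind X hX; exact hτind Y hY; exact hEind; exact hSind Y hY]
    · intro i hi
      interval_cases i <;> simp [hp]
      · exact ⟨f, hf⟩
      · exact ⟨g, hg⟩
      · exact ⟨h, hh⟩
    · simpa [hp] using hX
    · simpa [hp] using hY
  exact hsec Y hY (by simpa [hp] using h1)

end Stmt13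
end
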